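/- If A, B, C are n×n complex matrices such that the 2n×2n block matrix [[A, B], [B*, C]] is positive semidefinite, then for every j, 2·s_j(B) ≤ s_j([[A, B], [B*, C]]), where s_j denotes the j-th largest singular value. -/

import Mathlib

/-!
Conjugating by `diag(1, -1)` shows that `[[A, -B], [-B*, C]]` is positive semidefinite as well,
so the quadratic form of `M = [[A, B], [B*, C]]` dominates twice that of `T = [[0, B], [B*, 0]]`.
If `v` is an eigenvector of `B*B` with eigenvalue `s² > 0`, then `(s⁻¹ B v, v)` is an eigenvector
of `T` with eigenvalue `s`; orthogonal `v`'s give orthogonal such vectors. On the span of those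
coming from the `j + 1` largest singular values of `B`, the quadratic form of `M` is therefore at
least `2 s_j(B) |x|²`, and the easy half of the Courant–Fischer min-max principle turns this into
`2 s_j(B) ≤ λ_j(M)`. Finally `λ_j(M) ≤ s_j(M)`, because `λ_j(M)²` is bounded by the `j`-th
eigenvalue of `M*M = M²` by the same min-max argument.
-/

open Matrix
open scoped ComplexOrder

/-- The positive semidefinite square root of a positive semidefinite matrix (the definition
that Mathlib had as `Matrix.PosSemidef.sqrt`, since removed). -/
noncomputable def Matrix.PosSemidef.sqrt {n 𝕜 : Type*} [Fintype n] [DecidableEq n] [RCLike 𝕜]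
    {A : Matrix n n 𝕜} (hA : A.PosSemidef) : Matrix n n 𝕜 :=
  hA.1.eigenvectorUnitary.1 * Matrix.diagonal ((↑) ∘ (√·) ∘ hA.1.eigenvalues) *
  (star hA.1.eigenvectorUnitary : Matrix n n 𝕜)

theorem Matrix.PosSemidef.posSemidef_sqrt {n 𝕜 : Type*} [Fintype n] [DecidableEq n] [RCLike 𝕜]
    {A : Matrix n n 𝕜} (hA : A.PosSemidef) : hA.sqrt.PosSemidef := by
  unfold Matrix.PosSemidef.sqrt
  apply Matrix.PosSemidef.mul_mul_conjTranspose_same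
  refine Matrix.posSemidef_diagonal_iff.mpr fun i ↦ ?_
  rw [Function.comp_apply, RCLike.nonneg_iff]
  constructor
  · simp only [RCLike.ofReal_re]
    exact Real.sqrt_nonneg _
  · simp only [RCLike.ofReal_im]

/-- The `j`-th largest singular value of a square complex matrix (`j : Fin m`, zero-indexed,
so `sv A 0` is the largest singular value). It is defined as the square root of the `j`-th
largest eigenvalue of `Aᴴ * A`. -/
noncomputable def sv {m : ℕ} (A : Matrix (Fin m) (Fin m) ℂ) (j : Fin m) : ℝ :=
  Real.sqrt ((Matrix.isHermitian_conjTranspose_mul_self A).eigenvalues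
    (Tuple.sort ((Matrix.isHermitian_conjTranspose_mul_self A).eigenvalues) j.rev))

/-- The absolute value `|A| = (Aᴴ A)^{1/2}` of a square complex matrix. -/
noncomputable def matAbs {m : ℕ} (A : Matrix (Fin m) (Fin m) ℂ) : Matrix (Fin m) (Fin m) ℂ :=
  (Matrix.posSemidef_conjTranspose_mul_self A).sqrt

/-- The `2n × 2n` block matrix `[[A, B], [C, D]]`, reindexed by `Fin (n + n)`. -/
noncomputable def blk {n : ℕ} (A B C D : Matrix (Fin n) (Fin n) ℂ) :
    Matrix (Fin (n + n)) (Fin (n + n)) ℂ :=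
  Matrix.reindex finSumFinEquiv finSumFinEquiv (Matrix.fromBlocks A B C D)

/-- `f(P)` for a Hermitian matrix `P`, via the spectral functional calculus. -/
noncomputable def herCfc {m : ℕ} {P : Matrix (Fin m) (Fin m) ℂ} (hP : P.IsHermitian)
    (f : ℝ → ℝ) : Matrix (Fin m) (Fin m) ℂ :=
  hP.cfc f

/-- `|A| ^ r` (real power of the absolute value), via the functional calculus. -/
noncomputable def matAbsPow {m : ℕ} (A : Matrix (Fin m) (Fin m) ℂ) (r : ℝ) :
    Matrix (Fin m) (Fin m) ℂ :=
  herCfc (Matrix.posSemidef_conjTranspose_mul_self A).posSemidef_sqrt.1 (fun t => t ^ r)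

/-- `f(|A|)`, via the functional calculus. -/
noncomputable def matAbsCfc {m : ℕ} (A : Matrix (Fin m) (Fin m) ℂ) (f : ℝ → ℝ) :
    Matrix (Fin m) (Fin m) ℂ :=
  herCfc (Matrix.posSemidef_conjTranspose_mul_self A).posSemidef_sqrt.1 f

/-- The operator norm: the largest singular value. -/
noncomputable def opNorm {m : ℕ} (A : Matrix (Fin m) (Fin m) ℂ) : ℝ :=
  ⨆ j, sv A j

section OrthogonalFamily

variable {𝕜 n ι : Type*} [RCLike 𝕜] [Fintype n] [Fintype ι] {v : ι → n → 𝕜}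

theorem star_sum_smul_dotProduct_sum_smul (hv : Pairwise fun i j ↦ star (v i) ⬝ᵥ v j = 0)
    (f g : ι → 𝕜) :
    star (∑ i, f i • v i) ⬝ᵥ ∑ i, g i • v i = ∑ i, star (f i) * g i * (star (v i) ⬝ᵥ v i) := by
  simp only [star_sum, star_smul, sum_dotProduct, dotProduct_sum, smul_dotProduct,
    dotProduct_smul, smul_eq_mul]
  refine Finset.sum_congr rfl fun i _ ↦ ?_
  rw [Finset.sum_eq_single i (fun j _ hji ↦ by rw [hv hji, mul_zero]) (by simp)]
  ring

theorem linearIndependent_of_pairwise_star_dotProduct_eq_zero (hv0 : ∀ i, v i ≠ 0)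
    (hv : Pairwise fun i j ↦ star (v i) ⬝ᵥ v j = 0) : LinearIndependent 𝕜 v := by
  refine Fintype.linearIndependent_iff.2 fun g hg i ↦ ?_
  have hvi : star (v i) ⬝ᵥ ∑ j, g j • v j = g i * (star (v i) ⬝ᵥ v i) := by
    rw [dotProduct_sum, Finset.sum_eq_single i
      (fun j _ hji ↦ by rw [dotProduct_smul, hv hji.symm, smul_zero]) (by simp),
      dotProduct_smul, smul_eq_mul]
  rw [hg, dotProduct_zero, eq_comm, mul_eq_zero] at hvi
  exact hvi.resolve_right (dotProduct_star_self_eq_zero.not.2 (hv0 i))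

theorem le_star_dotProduct_mulVec_of_mem_span {A : Matrix n n 𝕜} {μ : ι → ℝ} {c : ℝ}
    (hv : Pairwise fun i j ↦ star (v i) ⬝ᵥ v j = 0) (hAv : ∀ i, A *ᵥ v i = (μ i : 𝕜) • v i)
    (hc : ∀ i, c ≤ μ i) {x : n → 𝕜} (hx : x ∈ Submodule.span 𝕜 (Set.range v)) :
    (c : 𝕜) * (star x ⬝ᵥ x) ≤ star x ⬝ᵥ A *ᵥ x := by
  obtain ⟨f, rfl⟩ := (Submodule.mem_span_range_iff_exists_fun 𝕜).1 hx
  have hAx : A *ᵥ ∑ i, f i • v i = ∑ i, ((μ i : 𝕜) * f i) • v i := by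
    simp only [mulVec_sum, mulVec_smul, hAv, smul_smul, mul_comm]
  rw [hAx, star_sum_smul_dotProduct_sum_smul hv, star_sum_smul_dotProduct_sum_smul hv,
    Finset.mul_sum]
  refine Finset.sum_le_sum fun i _ ↦ ?_
  have hnonneg : 0 ≤ star (f i) * f i * (star (v i) ⬝ᵥ v i) :=
    mul_nonneg (star_mul_self_nonneg _) (dotProduct_star_self_nonneg _)
  calc (c : 𝕜) * (star (f i) * f i * (star (v i) ⬝ᵥ v i))
      ≤ μ i * (star (f i) * f i * (star (v i) ⬝ᵥ v i)) :=
        mul_le_mul_of_nonneg_right (RCLike.ofReal_le_ofReal.2 (hc i)) hnonneg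
    _ = star (f i) * (μ i * f i) * (star (v i) ⬝ᵥ v i) := by ring

theorem star_dotProduct_mulVec_le_of_mem_span {A : Matrix n n 𝕜} {μ : ι → ℝ} {c : ℝ}
    (hv : Pairwise fun i j ↦ star (v i) ⬝ᵥ v j = 0) (hAv : ∀ i, A *ᵥ v i = (μ i : 𝕜) • v i)
    (hc : ∀ i, μ i ≤ c) {x : n → 𝕜} (hx : x ∈ Submodule.span 𝕜 (Set.range v)) :
    star x ⬝ᵥ A *ᵥ x ≤ (c : 𝕜) * (star x ⬝ᵥ x) := by
  have := le_star_dotProduct_mulVec_of_mem_span (A := -A) (μ := -μ) (c := -c) hv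
    (fun i ↦ by simp [neg_mulVec, hAv]) (fun i ↦ neg_le_neg (hc i)) hx
  simpa [neg_mulVec] using this

end OrthogonalFamily

namespace Matrix.IsHermitian

variable {𝕜 : Type*} [RCLike 𝕜] {m : ℕ} {A : Matrix (Fin m) (Fin m) 𝕜}

/-- The eigenvalues in increasing order, so that `sv A j = √(sortedEigenvalues _ j.rev)` for the
Hermitian matrix `Aᴴ * A`. -/
noncomputable def sortedEigenvalues (hA : A.IsHermitian) : Fin m → ℝ :=
  hA.eigenvalues ∘ Tuple.sort hA.eigenvalues

noncomputable def sortedEigenvectors (hA : A.IsHermitian) (i : Fin m) : Fin m → 𝕜 :=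
  hA.eigenvectorBasis (Tuple.sort hA.eigenvalues i)

variable (hA : A.IsHermitian)

theorem monotone_sortedEigenvalues : Monotone hA.sortedEigenvalues :=
  Tuple.monotone_sort _

theorem mulVec_sortedEigenvectors (i : Fin m) :
    A *ᵥ hA.sortedEigenvectors i = (hA.sortedEigenvalues i : 𝕜) • hA.sortedEigenvectors i := by
  ext l
  simp [sortedEigenvectors, sortedEigenvalues, hA.mulVec_eigenvectorBasis,
    RCLike.real_smul_eq_coe_mul]

theorem star_sortedEigenvectors_dotProduct (i j : Fin m) :
    star (hA.sortedEigenvectors i) ⬝ᵥ hA.sortedEigenvectors j = if i = j then 1 else 0 := by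
  have := orthonormal_iff_ite.1 hA.eigenvectorBasis.orthonormal
    (Tuple.sort hA.eigenvalues i) (Tuple.sort hA.eigenvalues j)
  simp only [EuclideanSpace.inner_eq_star_dotProduct, (Tuple.sort _).injective.eq_iff] at this
  rw [sortedEigenvectors, sortedEigenvectors, dotProduct_comm, this]

theorem sortedEigenvectors_ne_zero (i : Fin m) : hA.sortedEigenvectors i ≠ 0 := by
  intro h
  simpa [h] using hA.star_sortedEigenvectors_dotProduct i i

theorem pairwise_star_sortedEigenvectors_dotProduct (s : Set (Fin m)) :
    Pairwise fun i j : s ↦ star (hA.sortedEigenvectors i) ⬝ᵥ hA.sortedEigenvectors j = 0 :=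
  fun i j hij ↦ (hA.star_sortedEigenvectors_dotProduct i j).trans
    (if_neg (Subtype.coe_ne_coe.2 hij))

theorem finrank_span_sortedEigenvectors (s : Set (Fin m)) [Fintype s] :
    Module.finrank 𝕜 (Submodule.span 𝕜 (Set.range fun i : s ↦ hA.sortedEigenvectors i)) =
      Fintype.card s :=
  finrank_span_eq_card <| linearIndependent_of_pairwise_star_dotProduct_eq_zero
    (fun i ↦ hA.sortedEigenvectors_ne_zero i) (hA.pairwise_star_sortedEigenvectors_dotProduct s)

/-- The easy half of the Courant–Fischer min-max principle: a subspace `W` meets the span of the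
first `k + 1` eigenvectors nontrivially. -/
theorem le_sortedEigenvalues_of_forall_mem (k : Fin m) {W : Submodule 𝕜 (Fin m → 𝕜)}
    (hW : m ≤ Module.finrank 𝕜 W + k) {c : ℝ}
    (hc : ∀ x ∈ W, (c : 𝕜) * (star x ⬝ᵥ x) ≤ star x ⬝ᵥ A *ᵥ x) :
    c ≤ hA.sortedEigenvalues k := by
  set E := Submodule.span 𝕜 (Set.range fun i : Set.Iic k ↦ hA.sortedEigenvectors i)
  obtain ⟨x, hxW, hxE, hx0⟩ : ∃ x ∈ W, x ∈ E ∧ x ≠ 0 := by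
    by_contra! h
    have := Submodule.finrank_add_finrank_le_of_disjoint (Submodule.disjoint_def.2 h)
    rw [hA.finrank_span_sortedEigenvectors, Fintype.card_Iic, Fin.card_Iic,
      Module.finrank_fin_fun] at this
    omega
  have hxA := star_dotProduct_mulVec_le_of_mem_span
    (hA.pairwise_star_sortedEigenvectors_dotProduct _) (fun i ↦ hA.mulVec_sortedEigenvectors i)
    (fun i ↦ hA.monotone_sortedEigenvalues i.2) hxE
  exact RCLike.ofReal_le_ofReal.1 <|
    le_of_mul_le_mul_right ((hc x hxW).trans hxA) (dotProduct_star_self_pos_iff.2 hx0)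

end Matrix.IsHermitian

namespace Matrix.PosSemidef

variable {𝕜 : Type*} [RCLike 𝕜] {m : ℕ} {A : Matrix (Fin m) (Fin m) 𝕜}

theorem sortedEigenvalues_nonneg (hA : A.PosSemidef) (i : Fin m) :
    0 ≤ hA.1.sortedEigenvalues i :=
  hA.eigenvalues_nonneg _

theorem sq_sortedEigenvalues_le (hA : A.PosSemidef) (k : Fin m) :
    hA.1.sortedEigenvalues k ^ 2 ≤ (isHermitian_conjTranspose_mul_self A).sortedEigenvalues k := by
  refine IsHermitian.le_sortedEigenvalues_of_forall_mem _ k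
    (W := Submodule.span 𝕜 (Set.range fun i : Set.Ici k ↦ hA.1.sortedEigenvectors i)) ?_
    fun x hx ↦ le_star_dotProduct_mulVec_of_mem_span
      (μ := fun i : Set.Ici k ↦ hA.1.sortedEigenvalues i ^ 2)
      (hA.1.pairwise_star_sortedEigenvectors_dotProduct _) (fun i ↦ ?_) (fun i ↦ ?_) hx
  · rw [hA.1.finrank_span_sortedEigenvectors, Fintype.card_Ici, Fin.card_Ici]
    omega
  · rw [← mulVec_mulVec, hA.1.mulVec_sortedEigenvectors, mulVec_smul, hA.1.eq,
      hA.1.mulVec_sortedEigenvectors, smul_smul, ← RCLike.ofReal_mul, ← sq]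
  · exact pow_le_pow_left₀ (hA.sortedEigenvalues_nonneg k)
      (hA.1.monotone_sortedEigenvalues i.2) 2

end Matrix.PosSemidef

theorem Matrix.PosSemidef.sortedEigenvalues_rev_le_sv {m : ℕ} {A : Matrix (Fin m) (Fin m) ℂ}
    (hA : A.PosSemidef) (j : Fin m) : hA.1.sortedEigenvalues j.rev ≤ sv A j :=
  (Real.le_sqrt (hA.sortedEigenvalues_nonneg _)
    ((posSemidef_conjTranspose_mul_self A).sortedEigenvalues_nonneg _)).2
    (hA.sq_sortedEigenvalues_le j.rev)

theorem Matrix.PosSemidef.fromBlocks_neg {m n R : Type*} [Fintype m] [Fintype n] [Ring R]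
    [PartialOrder R] [StarRing R] {A : Matrix m m R} {B : Matrix m n R} {C : Matrix n n R}
    (h : (fromBlocks A B Bᴴ C).PosSemidef) : (fromBlocks A (-B) (-Bᴴ) C).PosSemidef := by
  classical
  simpa [fromBlocks_multiply, fromBlocks_conjTranspose] using
    h.mul_mul_conjTranspose_same (fromBlocks (1 : Matrix m m R) 0 0 (-1 : Matrix n n R))

section Append

variable {m n : ℕ}

theorem Fin.append_eq_sumElim_comp {α : Type*} (a : Fin m → α) (b : Fin n → α) :
    Fin.append a b = Sum.elim a b ∘ finSumFinEquiv.symm := by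
  ext i
  refine Fin.addCases (fun i ↦ ?_) (fun i ↦ ?_) i <;>
    simp only [Function.comp_apply, Fin.append_left, Fin.append_right,
      finSumFinEquiv_symm_apply_castAdd, finSumFinEquiv_symm_apply_natAdd, Sum.elim_inl,
      Sum.elim_inr]

theorem Fin.append_ne_zero_of_right {α : Type*} [Zero α] (a : Fin m → α) {b : Fin n → α}
    (hb : b ≠ 0) : Fin.append a b ≠ 0 :=
  fun h ↦ hb <| funext fun i ↦ by simpa using congr_fun h (Fin.natAdd m i)

variable {𝕜 : Type*} [RCLike 𝕜]

theorem star_append_dotProduct_append (a c : Fin m → 𝕜) (b d : Fin n → 𝕜) :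
    star (Fin.append a b) ⬝ᵥ Fin.append c d = star a ⬝ᵥ c + star b ⬝ᵥ d := by
  simp only [dotProduct, Fin.sum_univ_add, Pi.star_apply, Fin.append_left, Fin.append_right]

theorem star_mulVec_dotProduct_mulVec (B : Matrix (Fin m) (Fin n) 𝕜) (v w : Fin n → 𝕜) :
    star (B *ᵥ v) ⬝ᵥ B *ᵥ w = star v ⬝ᵥ (Bᴴ * B) *ᵥ w := by
  rw [star_mulVec, ← dotProduct_mulVec, mulVec_mulVec]

theorem star_append_dotProduct_append_eq_zero {B : Matrix (Fin m) (Fin n) 𝕜} {s t : 𝕜}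
    {v w : Fin n → 𝕜} (hw : (Bᴴ * B) *ᵥ w = t ^ 2 • w) (hvw : star v ⬝ᵥ w = 0) :
    star (Fin.append (s⁻¹ • B *ᵥ v) v) ⬝ᵥ Fin.append (t⁻¹ • B *ᵥ w) w = 0 := by
  rw [star_append_dotProduct_append, star_smul, smul_dotProduct, dotProduct_smul,
    star_mulVec_dotProduct_mulVec, hw, dotProduct_smul, hvw]
  simp

end Append

section Block

variable {n : ℕ}

theorem blk_mulVec_append (A B C D : Matrix (Fin n) (Fin n) ℂ) (a b : Fin n → ℂ) :
    blk A B C D *ᵥ Fin.append a b = Fin.append (A *ᵥ a + B *ᵥ b) (C *ᵥ a + D *ᵥ b) := by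
  rw [blk, reindex_apply, submatrix_mulVec_equiv, Fin.append_eq_sumElim_comp,
    Fin.append_eq_sumElim_comp, Equiv.symm_symm, Function.comp_assoc, Equiv.symm_comp_self,
    Function.comp_id, fromBlocks_mulVec]
  rfl

theorem blk_zero_mulVec_append {B : Matrix (Fin n) (Fin n) ℂ} {s : ℂ} (hs : s ≠ 0)
    {v : Fin n → ℂ} (hv : (Bᴴ * B) *ᵥ v = s ^ 2 • v) :
    blk 0 B Bᴴ 0 *ᵥ Fin.append (s⁻¹ • B *ᵥ v) v = s • Fin.append (s⁻¹ • B *ᵥ v) v := by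
  rw [blk_mulVec_append, zero_mulVec, zero_mulVec, zero_add, add_zero, mulVec_smul,
    mulVec_mulVec, hv, smul_smul, sq, inv_mul_cancel_left₀ hs]
  ext i
  refine Fin.addCases (fun i ↦ ?_) (fun i ↦ ?_) i <;>
    simp only [Pi.smul_apply, Fin.append_left, Fin.append_right, smul_eq_mul,
      mul_inv_cancel_left₀ hs]

theorem blk_sub_two_smul_blk_zero (A B C : Matrix (Fin n) (Fin n) ℂ) :
    blk A B Bᴴ C - (2 : ℂ) • blk 0 B Bᴴ 0 = blk A (-B) (-Bᴴ) C := by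
  have : fromBlocks A B Bᴴ C - (2 : ℂ) • fromBlocks 0 B Bᴴ 0 = fromBlocks A (-B) (-Bᴴ) C := by
    ext (i | i) (j | j) <;> simp <;> ring
  rw [blk, blk, blk, ← this]
  rfl

theorem two_mul_star_dotProduct_blk_zero_mulVec_le {A B C : Matrix (Fin n) (Fin n) ℂ}
    (h : (blk A B Bᴴ C).PosSemidef) (x : Fin (n + n) → ℂ) :
    2 * (star x ⬝ᵥ blk 0 B Bᴴ 0 *ᵥ x) ≤ star x ⬝ᵥ blk A B Bᴴ C *ᵥ x := by
  have h' : (blk A (-B) (-Bᴴ) C).PosSemidef :=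
    (posSemidef_submatrix_equiv _).2 ((posSemidef_submatrix_equiv _).1 h).fromBlocks_neg
  have := h'.dotProduct_mulVec_nonneg x
  rwa [← blk_sub_two_smul_blk_zero, sub_mulVec, dotProduct_sub, smul_mulVec, dotProduct_smul,
    smul_eq_mul, sub_nonneg] at this

theorem exists_finrank_eq_forall_sv_mul_le_blk_zero (B : Matrix (Fin n) (Fin n) ℂ) (j : Fin n)
    (hj : 0 < sv B j) :
    ∃ W : Submodule ℂ (Fin (n + n) → ℂ), Module.finrank ℂ W = j + 1 ∧
      ∀ x ∈ W, (sv B j : ℂ) * (star x ⬝ᵥ x) ≤ star x ⬝ᵥ blk 0 B Bᴴ 0 *ᵥ x := by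
  set hQ := isHermitian_conjTranspose_mul_self B
  set s : Fin n → ℝ := fun i ↦ √(hQ.sortedEigenvalues i)
  have hs : ∀ i : Set.Ici j.rev, sv B j ≤ s i :=
    fun i ↦ Real.sqrt_le_sqrt (hQ.monotone_sortedEigenvalues i.2)
  have hs0 : ∀ i : Set.Ici j.rev, (s i : ℂ) ≠ 0 :=
    fun i ↦ Complex.ofReal_ne_zero.2 (hj.trans_le (hs i)).ne'
  have heig (i : Fin n) :
      (Bᴴ * B) *ᵥ hQ.sortedEigenvectors i = (s i : ℂ) ^ 2 • hQ.sortedEigenvectors i := by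
    rw [hQ.mulVec_sortedEigenvectors, ← Complex.ofReal_pow,
      Real.sq_sqrt ((posSemidef_conjTranspose_mul_self B).sortedEigenvalues_nonneg i)]
    rfl
  let g (i : Set.Ici j.rev) : Fin (n + n) → ℂ :=
    Fin.append ((s i : ℂ)⁻¹ • B *ᵥ hQ.sortedEigenvectors i) (hQ.sortedEigenvectors i)
  have hg : Pairwise fun a b ↦ star (g a) ⬝ᵥ g b = 0 := fun a b hab ↦
    star_append_dotProduct_append_eq_zero (heig b)
      (hQ.pairwise_star_sortedEigenvectors_dotProduct _ hab)
  refine ⟨Submodule.span ℂ (Set.range g), ?_, fun x hx ↦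
    le_star_dotProduct_mulVec_of_mem_span hg (fun i ↦ blk_zero_mulVec_append (hs0 i) (heig i))
      hs hx⟩
  rw [finrank_span_eq_card (linearIndependent_of_pairwise_star_dotProduct_eq_zero (v := g)
    (fun i ↦ Fin.append_ne_zero_of_right _ (hQ.sortedEigenvectors_ne_zero i)) hg),
    Fintype.card_Ici, Fin.card_Ici, Fin.val_rev]
  omega

end Block

theorem tao_inequality {n : ℕ} (A B C : Matrix (Fin n) (Fin n) ℂ)
    (h : (blk A B Bᴴ C).PosSemidef) :
    ∀ j : Fin n, 2 * sv B j ≤ sv (blk A B Bᴴ C) (Fin.castAdd n j) := by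
  intro j
  rcases (show 0 ≤ sv B j from Real.sqrt_nonneg _).eq_or_lt with hj | hj
  · rw [← hj, mul_zero]
    exact Real.sqrt_nonneg _
  obtain ⟨W, hW, hBW⟩ := exists_finrank_eq_forall_sv_mul_le_blk_zero B j hj
  refine le_trans ?_ (h.sortedEigenvalues_rev_le_sv _)
  refine h.1.le_sortedEigenvalues_of_forall_mem _ (W := W) ?_ fun x hx ↦ ?_
  · rw [hW, Fin.val_rev, Fin.val_castAdd]
    omega
  · calc ((2 * sv B j : ℝ) : ℂ) * (star x ⬝ᵥ x) = 2 * ((sv B j : ℂ) * (star x ⬝ᵥ x)) := by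
          push_cast; ring
      _ ≤ 2 * (star x ⬝ᵥ blk 0 B Bᴴ 0 *ᵥ x) := mul_le_mul_of_nonneg_left (hBW x hx) two_pos.le
      _ ≤ star x ⬝ᵥ blk A B Bᴴ C *ᵥ x := two_mul_star_dotProduct_blk_zero_mulVec_le h x
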